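/- Let 0 < β ≤ 1/2 and 0 ≤ α ≤ β/2, and let A = {a_1 < a_2 < ...} and B = {b_1 < b_2 < ...} be two infinite subsets of ℕ such that (1) a_i − b_i = o(a_i^{β−α}) as i → ∞; (2) A(n) − B(n) = O(n^{α}); and (3) there is a constant c > 0 with A(n) ≤ c·n^{β} and B(n) ≤ c·n^{β} for all n ∈ ℕ. Then, as the integer N → ∞, Σ_{n=0}^{∞} (1 − 1/N)^{2n} · (A(n) − B(n))^2 = o(N^{2β}). -/

import Mathlib

/-!
Write `D(n) = A(n) - B(n)` and `y = 1 - 1/N`. By (2), `D(n)² ≤ C n^α |D(n)|` for large `n`, and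
`|D(n)|` is at most the number of indices `i` with `n` between `a_i` and `b_i`. Exchanging the
sums, the index `i` contributes at most `|a_i - b_i| max(a_i, b_i)^α y^{2 min(a_i, b_i)}`, which
by (1) is at most `2^α δ a_i^β e^{-a_i/N}` for large `i`. Cutting `ℕ` into blocks of length `N`,
(3) gives `∑_{a ∈ A} a^β e^{-a/N} ≤ 4c N^{2β}`, so the series is `O_δ(1) + O(δ N^{2β})` for
every `δ > 0`.
-/

open Filter Asymptotics

/-- The counting function `A(n) = |{a ∈ A : a ≤ n}|`. -/
noncomputable def countFn (A : Set ℕ) (n : ℕ) : ℕ := (A ∩ Set.Iic n).ncard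

open Finset Real

section Counting

variable {A B : Set ℕ}

lemma countFn_eq_count (A : Set ℕ) [DecidablePred (· ∈ A)] (n : ℕ) :
    countFn A n = Nat.count (· ∈ A) (n + 1) := by
  rw [countFn, Nat.count_eq_card_filter_range, ← Set.ncard_coe_finset]
  congr 1
  ext x
  simp [and_comm]

lemma countFn_mono (A : Set ℕ) : Monotone (countFn A) := fun _ n h =>
  Set.ncard_le_ncard (Set.inter_subset_inter_right _ (Set.Iic_subset_Iic.2 h))
    ((Set.finite_Iic n).inter_of_right _)

lemma card_le_countFn {t : Finset ℕ} (ht : ↑t ⊆ A) {m : ℕ} (hm : ∀ n ∈ t, n ≤ m) :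
    #t ≤ countFn A m := by
  rw [← Set.ncard_coe_finset]
  exact Set.ncard_le_ncard (fun n hn => ⟨ht hn, hm n hn⟩) ((Set.finite_Iic m).inter_of_right _)

lemma nth_le_iff_lt_countFn (hA : A.Infinite) {i n : ℕ} :
    Nat.nth (· ∈ A) i ≤ n ↔ i < countFn A n := by
  classical
  rw [countFn_eq_count, Nat.lt_nth_iff_count_lt (p := (· ∈ A)) hA, Nat.lt_succ_iff]

noncomputable def nthGap (A B : Set ℕ) (i : ℕ) : Finset ℕ :=
  Ico (min (Nat.nth (· ∈ A) i) (Nat.nth (· ∈ B) i)) (max (Nat.nth (· ∈ A) i) (Nat.nth (· ∈ B) i))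

lemma nthGap_comm (A B : Set ℕ) (i : ℕ) : nthGap A B i = nthGap B A i := by
  rw [nthGap, nthGap, min_comm, max_comm]

lemma card_nthGap (A B : Set ℕ) (i : ℕ) :
    (#(nthGap A B i) : ℝ) = |(Nat.nth (· ∈ A) i : ℝ) - Nat.nth (· ∈ B) i| := by
  rw [nthGap, Nat.card_Ico, Nat.cast_sub min_le_max, Nat.cast_max, Nat.cast_min,
    max_sub_min_eq_abs, abs_sub_comm]

/-- For `B(n) ≤ i < A(n)` we have `a_i ≤ n < b_i`. -/
lemma countFn_sub_le_card_nthGap (hA : A.Infinite) (hB : B.Infinite) {n R : ℕ}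
    (hR : countFn A n ≤ R) :
    (countFn A n : ℝ) - countFn B n ≤ #{i ∈ range R | n ∈ nthGap A B i} := by
  have hsub : Ico (countFn B n) (countFn A n) ⊆ {i ∈ range R | n ∈ nthGap A B i} := by
    intro i hi
    rw [mem_Ico] at hi
    have ha := (nth_le_iff_lt_countFn hA).2 hi.2
    have hb := lt_of_not_ge (mt (nth_le_iff_lt_countFn hB).1 hi.1.not_gt)
    simp only [mem_filter, mem_range, nthGap, mem_Ico]
    exact ⟨hi.2.trans_le hR, min_le_of_left_le ha, lt_max_of_lt_right hb⟩
  have := card_le_card hsub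
  rw [Nat.card_Ico] at this
  rw [sub_le_iff_le_add']
  exact_mod_cast Nat.sub_le_iff_le_add'.1 this

lemma abs_countFn_sub_le_card_nthGap (hA : A.Infinite) (hB : B.Infinite) {n R : ℕ}
    (hRA : countFn A n ≤ R) (hRB : countFn B n ≤ R) :
    |(countFn A n : ℝ) - countFn B n| ≤ #{i ∈ range R | n ∈ nthGap A B i} := by
  refine abs_sub_le_iff.2 ⟨countFn_sub_le_card_nthGap hA hB hRA, ?_⟩
  simpa only [nthGap_comm A B] using countFn_sub_le_card_nthGap hB hA hRB

lemma sum_mul_abs_countFn_sub_le (hA : A.Infinite) (hB : B.Infinite) {w : ℕ → ℝ}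
    (hw : ∀ n, 0 ≤ w n) (s : Finset ℕ) {R : ℕ} (hR : ∀ n ∈ s, countFn A n ≤ R ∧ countFn B n ≤ R) :
    ∑ n ∈ s, w n * |(countFn A n : ℝ) - countFn B n| ≤
      ∑ i ∈ range R, ∑ n ∈ nthGap A B i, w n := by
  classical
  calc ∑ n ∈ s, w n * |(countFn A n : ℝ) - countFn B n|
      ≤ ∑ n ∈ s, ∑ i ∈ range R, if n ∈ nthGap A B i then w n else 0 := by
        refine sum_le_sum fun n hn => ?_
        rw [← sum_filter, sum_const, nsmul_eq_mul, mul_comm]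
        exact mul_le_mul_of_nonneg_right
          (abs_countFn_sub_le_card_nthGap hA hB (hR n hn).1 (hR n hn).2) (hw n)
    _ = ∑ i ∈ range R, ∑ n ∈ s ∩ nthGap A B i, w n := by
        rw [sum_comm]
        exact sum_congr rfl fun i _ => sum_ite_mem _ _ _
    _ ≤ ∑ i ∈ range R, ∑ n ∈ nthGap A B i, w n :=
        sum_le_sum fun i _ => sum_le_sum_of_subset_of_nonneg inter_subset_right
          fun n _ _ => hw n

end Counting

lemma sum_Ico_pow_mul_rpow_le {x α : ℝ} (hx0 : 0 ≤ x) (hx1 : x ≤ 1) (hα : 0 ≤ α) (m M : ℕ) :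
    ∑ n ∈ Ico m M, x ^ n * (n : ℝ) ^ α ≤ #(Ico m M) * (x ^ m * (M : ℝ) ^ α) := by
  rw [← nsmul_eq_mul]
  refine sum_le_card_nsmul _ _ _ fun n hn => ?_
  rw [mem_Ico] at hn
  exact mul_le_mul (pow_le_pow_of_le_one hx0 hx1 hn.1) (by gcongr; exact hn.2.le)
    (by positivity) (by positivity)

lemma one_sub_one_div_nonneg {N : ℝ} (hN : 1 ≤ N) : 0 ≤ 1 - 1 / N :=
  sub_nonneg.2 ((div_le_one (by linarith)).2 hN)

lemma one_sub_one_div_pow_le_exp {N : ℝ} (hN : 1 ≤ N) (n : ℕ) :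
    (1 - 1 / N) ^ n ≤ exp (-(n / N)) := by
  have := one_sub_one_div_nonneg hN
  calc (1 - 1 / N) ^ n ≤ exp (-(1 / N)) ^ n := by
        gcongr
        linarith [add_one_le_exp (-(1 / N))]
    _ = exp (-(n / N)) := by rw [← exp_nat_mul]; ring_nf

lemma sum_add_one_mul_half_pow_le (u : Finset ℕ) : ∑ k ∈ u, ((k : ℝ) + 1) * (1 / 2) ^ k ≤ 4 := by
  have h : HasSum (fun k : ℕ => ((k : ℝ) + 1) * (1 / 2) ^ k) 4 := by
    have h := (hasSum_coe_mul_geometric_of_norm_lt_one (𝕜 := ℝ) (r := 1 / 2) (by norm_num)).add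
      (hasSum_geometric_of_lt_one (r := (1 : ℝ) / 2) (by norm_num) (by norm_num))
    rw [show (1 : ℝ) / 2 / (1 - 1 / 2) ^ 2 + (1 - 1 / 2)⁻¹ = 4 by norm_num] at h
    simpa only [add_mul, one_mul] using h
  exact sum_le_hasSum u (fun k _ => by positivity) h

lemma exp_neg_natCast_le_half_pow (k : ℕ) : exp (-(k : ℝ)) ≤ (1 / 2) ^ k := by
  rw [show -(k : ℝ) = k * (-1) by ring, exp_nat_mul]
  exact pow_le_pow_left₀ (exp_pos _).le exp_neg_one_lt_half.le k

lemma rpow_mul_exp_neg_div_le_of_div_eq {β : ℝ} (hβ : 0 ≤ β) {n N k : ℕ} (hN : 0 < N)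
    (hk : n / N = k) :
    (n : ℝ) ^ β * exp (-(n / N)) ≤ (((k : ℝ) + 1) * N) ^ β * exp (-(k : ℝ)) := by
  have hN' : (0 : ℝ) < N := by exact_mod_cast hN
  have hlt : n < (k + 1) * N := (Nat.div_lt_iff_lt_mul hN).1 (hk ▸ Nat.lt_succ_self _)
  have hle : k * N ≤ n := hk ▸ Nat.div_mul_le_self n N
  gcongr
  · exact_mod_cast hlt.le
  · rw [le_div_iff₀ hN']
    exact_mod_cast hle

/-- Summing by blocks `kN ≤ n < (k+1)N`: the `k`-th block holds at most `c ((k+1)N)^β` elements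
of `A`, each contributing at most `((k+1)N)^β e^{-k}`. -/
lemma sum_rpow_mul_exp_neg_div_le {A : Set ℕ} {β c : ℝ} (hβ0 : 0 ≤ β) (hβ1 : β ≤ 1 / 2)
    (hc : ∀ n : ℕ, (countFn A n : ℝ) ≤ c * (n : ℝ) ^ β) {t : Finset ℕ} (ht : ↑t ⊆ A) {N : ℕ}
    (hN : 0 < N) :
    ∑ n ∈ t, (n : ℝ) ^ β * exp (-(n / N)) ≤ 4 * c * (N : ℝ) ^ (2 * β) := by
  classical
  have hc0 : 0 ≤ c := by simpa using (Nat.cast_nonneg _).trans (hc 1)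
  have hblock : ∀ k : ℕ, ∑ n ∈ t with n / N = k, (n : ℝ) ^ β * exp (-(n / N)) ≤
      c * (N : ℝ) ^ (2 * β) * (((k : ℝ) + 1) * (1 / 2) ^ k) := by
    intro k
    have hL : (0 : ℝ) < ((k : ℝ) + 1) * N := by positivity
    have hcard : (#{n ∈ t | n / N = k} : ℝ) ≤ c * (((k : ℝ) + 1) * N) ^ β := by
      refine le_trans ?_ ((hc ((k + 1) * N)).trans_eq (by push_cast; rfl))
      refine Nat.cast_le.2 (card_le_countFn ((coe_subset.2 (filter_subset _ _)).trans ht) ?_)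
      intro n hn
      exact ((Nat.div_lt_iff_lt_mul hN).1 ((mem_filter.1 hn).2 ▸ Nat.lt_succ_self _)).le
    have hpow : ((k : ℝ) + 1) ^ (2 * β) ≤ (k : ℝ) + 1 :=
      (rpow_le_rpow_of_exponent_le (by linarith [k.cast_nonneg (α := ℝ)]) (by linarith)).trans_eq
        (rpow_one _)
    calc ∑ n ∈ t with n / N = k, (n : ℝ) ^ β * exp (-(n / N))
        ≤ #{n ∈ t | n / N = k} • ((((k : ℝ) + 1) * N) ^ β * exp (-(k : ℝ))) :=
          sum_le_card_nsmul _ _ _ fun n hn =>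
            rpow_mul_exp_neg_div_le_of_div_eq hβ0 hN (mem_filter.1 hn).2
      _ ≤ c * (((k : ℝ) + 1) * N) ^ β * ((((k : ℝ) + 1) * N) ^ β * exp (-(k : ℝ))) := by
          rw [nsmul_eq_mul]
          gcongr
      _ = c * (N : ℝ) ^ (2 * β) * (((k : ℝ) + 1) ^ (2 * β) * exp (-(k : ℝ))) := by
          rw [mul_assoc c, ← mul_assoc _ _ (exp _), ← rpow_add hL, ← two_mul,
            mul_rpow (by positivity) (by positivity)]
          ring
      _ ≤ c * (N : ℝ) ^ (2 * β) * (((k : ℝ) + 1) * (1 / 2) ^ k) := by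
          gcongr
          exact exp_neg_natCast_le_half_pow k
  calc ∑ n ∈ t, (n : ℝ) ^ β * exp (-(n / N))
      = ∑ k ∈ t.image (· / N), ∑ n ∈ t with n / N = k, (n : ℝ) ^ β * exp (-(n / N)) :=
        (sum_fiberwise_of_maps_to (fun n hn => mem_image_of_mem _ hn) _).symm
    _ ≤ ∑ k ∈ t.image (· / N), c * (N : ℝ) ^ (2 * β) * (((k : ℝ) + 1) * (1 / 2) ^ k) :=
        sum_le_sum fun k _ => hblock k
    _ ≤ c * (N : ℝ) ^ (2 * β) * 4 := by
        rw [← mul_sum]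
        gcongr
        exact sum_add_one_mul_half_pow_le _
    _ = 4 * c * (N : ℝ) ^ (2 * β) := by ring

lemma abs_sub_mul_pow_min_mul_rpow_max_le {a b : ℕ} {α β δ y : ℝ} (hα : 0 ≤ α) (hy0 : 0 ≤ y)
    (hy1 : y ≤ 1) (ha : (0 : ℝ) < a) (hδ : |(a : ℝ) - b| ≤ δ * (a : ℝ) ^ (β - α))
    (hhalf : 2 * |(a : ℝ) - b| ≤ a) :
    |(a : ℝ) - b| * ((y ^ 2) ^ min a b * ((max a b : ℕ) : ℝ) ^ α) ≤
      2 ^ α * δ * ((a : ℝ) ^ β * y ^ a) := by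
  have hab := neg_abs_le ((a : ℝ) - b)
  have hab' := le_abs_self ((a : ℝ) - b)
  have hmin : a ≤ 2 * min a b := by
    have : (a : ℝ) ≤ 2 * min (a : ℝ) b := by rw [mul_min_of_nonneg _ _ zero_le_two]; grind
    exact_mod_cast this
  have hmax : ((max a b : ℕ) : ℝ) ≤ 2 * a := by rw [Nat.cast_max]; grind
  calc |(a : ℝ) - b| * ((y ^ 2) ^ min a b * ((max a b : ℕ) : ℝ) ^ α)
      ≤ (δ * (a : ℝ) ^ (β - α)) * (y ^ a * (2 * (a : ℝ)) ^ α) := by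
        rw [← pow_mul]
        gcongr ?_ * (?_ * ?_)
        · exact (abs_nonneg _).trans hδ
        · exact pow_le_pow_of_le_one hy0 hy1 hmin
        · gcongr
    _ = 2 ^ α * δ * ((a : ℝ) ^ β * y ^ a) := by
        rw [mul_rpow zero_le_two ha.le, show β = β - α + α by ring, rpow_add ha]
        ring_nf

lemma eventually_two_mul_abs_le {ι : Type*} {l : Filter ι} {u v : ι → ℝ} {γ : ℝ} (hγ : γ ≤ 1)
    (hv : ∀ᶠ i in l, 1 ≤ v i) (h : u =o[l] fun i => v i ^ γ) :
    ∀ᶠ i in l, 2 * |u i| ≤ v i := by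
  filter_upwards [hv, h.def (by norm_num : (0 : ℝ) < 1 / 2)] with i hvi hi
  rw [norm_eq_abs, norm_eq_abs, abs_of_nonneg (rpow_nonneg (by linarith) _)] at hi
  linarith [rpow_le_self_of_one_le hvi hγ]

lemma sum_mul_sq_le {f g w : ℕ → ℝ} {n₁ : ℕ} (hg : ∀ n, 0 ≤ g n) (hw0 : ∀ n, 0 ≤ w n)
    (hw1 : ∀ n, w n ≤ 1) (hfg : ∀ n ≥ n₁, |f n| ≤ g n) (s : Finset ℕ) :
    ∑ n ∈ s, w n * f n ^ 2 ≤ ∑ n ∈ range n₁, f n ^ 2 + ∑ n ∈ s, w n * (g n * |f n|) := by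
  classical
  have hpt : ∀ n,
      w n * f n ^ 2 ≤ (if n ∈ range n₁ then f n ^ 2 else 0) + w n * (g n * |f n|) := by
    intro n
    have hg' : 0 ≤ w n * (g n * |f n|) := by have := hg n; have := hw0 n; positivity
    split_ifs with hn
    · linarith [mul_le_of_le_one_left (sq_nonneg (f n)) (hw1 n)]
    · rw [zero_add, ← sq_abs]
      exact mul_le_mul_of_nonneg_left
        (pow_two (|f n|) ▸ mul_le_mul_of_nonneg_right (hfg n (by simpa using hn)) (abs_nonneg _))
        (hw0 n)
  calc ∑ n ∈ s, w n * f n ^ 2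
      ≤ ∑ n ∈ s, ((if n ∈ range n₁ then f n ^ 2 else 0) + w n * (g n * |f n|)) :=
        sum_le_sum fun n _ => hpt n
    _ ≤ ∑ n ∈ range n₁, f n ^ 2 + ∑ n ∈ s, w n * (g n * |f n|) := by
        rw [sum_add_distrib, sum_ite_mem, inter_comm]
        exact add_le_add_left
          (sum_le_sum_of_subset_of_nonneg inter_subset_left fun n _ _ => sq_nonneg _) _

lemma isLittleO_of_forall_le_add_mul {ι : Type*} {l : Filter ι} {f g : ι → ℝ}
    (hf : ∀ᶠ i in l, 0 ≤ f i) (hg : Tendsto g l atTop)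
    (h : ∀ δ > 0, ∃ K, ∀ᶠ i in l, f i ≤ K + δ * g i) : f =o[l] g := by
  refine isLittleO_iff.2 fun ε hε => ?_
  obtain ⟨K, hK⟩ := h (ε / 2) (half_pos hε)
  filter_upwards [hf, hK, hg.eventually_ge_atTop (2 * K / ε), hg.eventually_ge_atTop 0]
    with i hfi hKi hgi hgi0
  rw [norm_of_nonneg hfi, norm_of_nonneg hgi0]
  rw [div_le_iff₀ hε] at hgi
  linarith

section WeightedSum

variable {A B : Set ℕ}

lemma sum_pow_mul_sq_countFn_sub_le (hA : A.Infinite) (hB : B.Infinite) {α C y : ℝ}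
    (hα : 0 ≤ α) (hC : 0 ≤ C) (hy0 : 0 ≤ y) (hy1 : y ≤ 1) {n₁ : ℕ}
    (hD : ∀ n ≥ n₁, |(countFn A n : ℝ) - countFn B n| ≤ C * (n : ℝ) ^ α) (s : Finset ℕ) :
    ∃ R, ∑ n ∈ s, y ^ (2 * n) * ((countFn A n : ℝ) - countFn B n) ^ 2 ≤
      ∑ n ∈ range n₁, ((countFn A n : ℝ) - countFn B n) ^ 2 +
        C * ∑ i ∈ range R, |(Nat.nth (· ∈ A) i : ℝ) - Nat.nth (· ∈ B) i| *
          ((y ^ 2) ^ min (Nat.nth (· ∈ A) i) (Nat.nth (· ∈ B) i) *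
            ((max (Nat.nth (· ∈ A) i) (Nat.nth (· ∈ B) i) : ℕ) : ℝ) ^ α) := by
  set T := s.sup id
  refine ⟨max (countFn A T) (countFn B T), ?_⟩
  have hR : ∀ n ∈ s, countFn A n ≤ max (countFn A T) (countFn B T) ∧
      countFn B n ≤ max (countFn A T) (countFn B T) := fun n hn =>
    ⟨(countFn_mono A (le_sup (f := id) hn)).trans (le_max_left _ _),
      (countFn_mono B (le_sup (f := id) hn)).trans (le_max_right _ _)⟩
  grw [sum_mul_sq_le (fun n => by positivity) (fun n => by positivity)
    (fun n => pow_le_one₀ hy0 hy1) hD s]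
  gcongr
  calc ∑ n ∈ s, y ^ (2 * n) * (C * (n : ℝ) ^ α * |(countFn A n : ℝ) - countFn B n|)
      = C * ∑ n ∈ s, (y ^ 2) ^ n * (n : ℝ) ^ α * |(countFn A n : ℝ) - countFn B n| := by
        rw [mul_sum]
        exact sum_congr rfl fun n _ => by rw [pow_mul]; ring
    _ ≤ C * ∑ i ∈ range (max (countFn A T) (countFn B T)),
          ∑ n ∈ nthGap A B i, (y ^ 2) ^ n * (n : ℝ) ^ α := by
        gcongr
        exact sum_mul_abs_countFn_sub_le hA hB (fun n => by positivity) s hR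
    _ ≤ _ := by
        gcongr with i
        rw [← card_nthGap]
        exact sum_Ico_pow_mul_rpow_le (by positivity) (pow_le_one₀ hy0 hy1) hα _ _

lemma sum_range_abs_nth_sub_mul_le (hA : A.Infinite) {α β c δ : ℝ} (hα : 0 ≤ α) (hβ0 : 0 ≤ β)
    (hβ1 : β ≤ 1 / 2) (hc : ∀ n : ℕ, (countFn A n : ℝ) ≤ c * (n : ℝ) ^ β) (hδ : 0 ≤ δ) {i₀ : ℕ}
    (hgap : ∀ i ≥ i₀, (0 : ℝ) < Nat.nth (· ∈ A) i ∧
      |(Nat.nth (· ∈ A) i : ℝ) - Nat.nth (· ∈ B) i| ≤ δ * (Nat.nth (· ∈ A) i : ℝ) ^ (β - α) ∧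
      2 * |(Nat.nth (· ∈ A) i : ℝ) - Nat.nth (· ∈ B) i| ≤ Nat.nth (· ∈ A) i)
    {N : ℕ} (hN : 1 ≤ N) (R : ℕ) :
    ∑ i ∈ range R, |(Nat.nth (· ∈ A) i : ℝ) - Nat.nth (· ∈ B) i| *
        (((1 - 1 / (N : ℝ)) ^ 2) ^ min (Nat.nth (· ∈ A) i) (Nat.nth (· ∈ B) i) *
          ((max (Nat.nth (· ∈ A) i) (Nat.nth (· ∈ B) i) : ℕ) : ℝ) ^ α) ≤
      ∑ i ∈ range i₀, |(Nat.nth (· ∈ A) i : ℝ) - Nat.nth (· ∈ B) i| *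
          ((max (Nat.nth (· ∈ A) i) (Nat.nth (· ∈ B) i) : ℕ) : ℝ) ^ α +
        2 ^ α * δ * (4 * c * (N : ℝ) ^ (2 * β)) := by
  set a := Nat.nth (· ∈ A)
  set b := Nat.nth (· ∈ B)
  have hN' : (1 : ℝ) ≤ N := by exact_mod_cast hN
  have hy0 := one_sub_one_div_nonneg hN'
  have hy1 : 1 - 1 / (N : ℝ) ≤ 1 := sub_le_self 1 (by positivity)
  rw [← sum_filter_add_sum_filter_not (range R) (· < i₀)]
  gcongr ?_ + ?_
  · calc ∑ i ∈ range R with i < i₀, |(a i : ℝ) - b i| *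
          (((1 - 1 / (N : ℝ)) ^ 2) ^ min (a i) (b i) * ((max (a i) (b i) : ℕ) : ℝ) ^ α)
        ≤ ∑ i ∈ range R with i < i₀, |(a i : ℝ) - b i| * ((max (a i) (b i) : ℕ) : ℝ) ^ α := by
          gcongr with i
          exact mul_le_of_le_one_left (by positivity) (pow_le_one₀ (by positivity)
            (pow_le_one₀ hy0 hy1))
      _ ≤ _ := sum_le_sum_of_subset_of_nonneg (fun i hi => by simp at hi ⊢; exact hi.2)
          fun i _ _ => by positivity
  · calc ∑ i ∈ range R with ¬i < i₀, |(a i : ℝ) - b i| *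
          (((1 - 1 / (N : ℝ)) ^ 2) ^ min (a i) (b i) * ((max (a i) (b i) : ℕ) : ℝ) ^ α)
        ≤ ∑ i ∈ range R with ¬i < i₀, 2 ^ α * δ * ((a i : ℝ) ^ β * exp (-(a i / N))) := by
          refine sum_le_sum fun i hi => ?_
          obtain ⟨hai, hδi, hhalf⟩ := hgap i (not_lt.1 (mem_filter.1 hi).2)
          refine (abs_sub_mul_pow_min_mul_rpow_max_le hα hy0 hy1 hai hδi hhalf).trans ?_
          gcongr
          exact one_sub_one_div_pow_le_exp hN' _
      _ = 2 ^ α * δ * ∑ n ∈ {i ∈ range R | ¬i < i₀}.image a, (n : ℝ) ^ β * exp (-(n / N)) := by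
          rw [sum_image (g := a) fun i _ j _ h => (Nat.nth_strictMono hA).injective h, mul_sum]
      _ ≤ 2 ^ α * δ * (4 * c * (N : ℝ) ^ (2 * β)) := by
          gcongr
          refine sum_rpow_mul_exp_neg_div_le hβ0 hβ1 hc ?_ hN
          simp only [coe_image]
          rintro _ ⟨i, -, rfl⟩
          exact Nat.nth_mem_of_infinite hA i

end WeightedSum

theorem stmt6_general (β α : ℝ) (hβ0 : 0 < β) (hβ1 : β ≤ 1 / 2)
    (hα0 : 0 ≤ α)
    (A B : Set ℕ) (hA : A.Infinite) (hB : B.Infinite)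
    (h1 : (fun i : ℕ => (Nat.nth (· ∈ A) i : ℝ) - (Nat.nth (· ∈ B) i : ℝ))
      =o[atTop] fun i : ℕ => (Nat.nth (· ∈ A) i : ℝ) ^ (β - α))
    (h2 : (fun n : ℕ => (countFn A n : ℝ) - (countFn B n : ℝ))
      =O[atTop] fun n : ℕ => (n : ℝ) ^ α)
    (h3 : ∃ c : ℝ, 0 < c ∧ ∀ n : ℕ,
      (countFn A n : ℝ) ≤ c * (n : ℝ) ^ β ∧ (countFn B n : ℝ) ≤ c * (n : ℝ) ^ β) :
    (fun N : ℕ => ∑' n : ℕ,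
        (1 - 1 / (N : ℝ)) ^ (2 * n) * ((countFn A n : ℝ) - (countFn B n : ℝ)) ^ 2)
      =o[atTop] fun N : ℕ => (N : ℝ) ^ (2 * β) := by
  obtain ⟨c, hc, hcA⟩ := h3
  obtain ⟨C, hC, hCD⟩ := h2.exists_pos
  obtain ⟨n₁, hD⟩ := eventually_atTop.1 hCD.bound
  have ha : Tendsto (fun i => (Nat.nth (· ∈ A) i : ℝ)) atTop atTop :=
    tendsto_natCast_atTop_atTop.comp (Nat.nth_strictMono hA).tendsto_atTop
  have hhalf := eventually_two_mul_abs_le (by linarith) (ha.eventually_ge_atTop 1) h1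
  refine isLittleO_of_forall_le_add_mul
    (.of_forall fun N => tsum_nonneg fun n => by rw [pow_mul]; positivity)
    ((tendsto_rpow_atTop (by positivity)).comp tendsto_natCast_atTop_atTop) fun ε hε => ?_
  have hδ : 0 < ε / (C * 2 ^ α * (4 * c)) := by positivity
  obtain ⟨i₀, hgap⟩ := eventually_atTop.1 <|
    ((ha.eventually_gt_atTop 0).and ((h1.def hδ).and hhalf)).mono fun i hi => by
      rwa [norm_eq_abs, norm_eq_abs, abs_of_nonneg (rpow_nonneg (Nat.cast_nonneg _) _)] at hi
  refine ⟨∑ n ∈ range n₁, ((countFn A n : ℝ) - countFn B n) ^ 2 +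
    C * ∑ i ∈ range i₀, |(Nat.nth (· ∈ A) i : ℝ) - Nat.nth (· ∈ B) i| *
      ((max (Nat.nth (· ∈ A) i) (Nat.nth (· ∈ B) i) : ℕ) : ℝ) ^ α,
    (eventually_ge_atTop 1).mono fun N hN => tsum_le_of_sum_le' (by positivity) fun s => ?_⟩
  have hN' : (1 : ℝ) ≤ N := by exact_mod_cast hN
  obtain ⟨R, hR⟩ := sum_pow_mul_sq_countFn_sub_le hA hB hα0 hC.le
    (one_sub_one_div_nonneg hN') (sub_le_self 1 (by positivity))
    (fun n hn => by simpa [norm_of_nonneg (rpow_nonneg n.cast_nonneg α)] using hD n hn) s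
  refine hR.trans ?_
  grw [sum_range_abs_nth_sub_mul_le hA hα0 hβ0.le hβ1 (fun n => (hcA n).1) hδ.le hgap hN R]
  rw [mul_add, ← add_assoc, show C * (2 ^ α * (ε / (C * 2 ^ α * (4 * c))) *
    (4 * c * (N : ℝ) ^ (2 * β))) = ε * (N : ℝ) ^ (2 * β) by field_simp]

theorem stmt6 (β α : ℝ) (hβ0 : 0 < β) (hβ1 : β ≤ 1 / 2)
    (hα0 : 0 ≤ α) (hα1 : α ≤ β / 2)
    (A B : Set ℕ) (hA : A.Infinite) (hB : B.Infinite)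
    (h1 : (fun i : ℕ => (Nat.nth (· ∈ A) i : ℝ) - (Nat.nth (· ∈ B) i : ℝ))
      =o[atTop] fun i : ℕ => (Nat.nth (· ∈ A) i : ℝ) ^ (β - α))
    (h2 : (fun n : ℕ => (countFn A n : ℝ) - (countFn B n : ℝ))
      =O[atTop] fun n : ℕ => (n : ℝ) ^ α)
    (h3 : ∃ c : ℝ, 0 < c ∧ ∀ n : ℕ,
      (countFn A n : ℝ) ≤ c * (n : ℝ) ^ β ∧ (countFn B n : ℝ) ≤ c * (n : ℝ) ^ β) :
    (fun N : ℕ => ∑' n : ℕ,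
        (1 - 1 / (N : ℝ)) ^ (2 * n) * ((countFn A n : ℝ) - (countFn B n : ℝ)) ^ 2)
      =o[atTop] fun N : ℕ => (N : ℝ) ^ (2 * β) :=
  stmt6_general β α hβ0 hβ1 hα0 A B hA hB h1 h2 h3
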